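/- Let ε > 0 and let s : [0, ε'] → ℝ be continuous on [0, ε'] and locally Lipschitz on [0, ε') with −s'(t) + s(t)² − b² ≤ 0 almost everywhere, for some b > 0 and ε' > 0. If s(0) ≥ b·coth(bε'), then s(t) ≥ b·coth(b(ε'−t)) for all t ∈ [0, ε'); in particular s cannot be continuous at ε', a contradiction that shows no such s exists with s(0) > b·coth(bε') for the given ε = ε'. -/

import Mathlib

open Real Set MeasureTheory

/-- The hyperbolic cotangent. -/
noncomputable def coth (x : ℝ) : ℝ := Real.cosh x / Real.sinh x

/-!
The function `g t = b coth (b (ε' - t))` solves the Riccati equation `g' = g² - b²` on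
`[0, ε')`, while `s` is an absolutely continuous supersolution, `s' ≥ s² - b²` a.e. Where `s < g`,
the difference `w = s - g` satisfies `w' ≥ (s + g) w ≥ M w` with `M` an upper bound of `s + g`,
so `w e^{-Mt}` cannot decrease; starting from `w 0 ≥ 0`, `w` never becomes negative. Since `g`
blows up at `ε'`, so would `s`, contradicting its continuity on `[0, ε']`.
-/

open Filter Topology

lemma absolutelyContinuousOnInterval_of_hasDerivAt {f f' : ℝ → ℝ} {a b : ℝ}
    (hf : ∀ x ∈ uIcc a b, HasDerivAt f (f' x) x) (hf' : ContinuousOn f' (uIcc a b)) :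
    AbsolutelyContinuousOnInterval f a b := by
  obtain ⟨C, hC⟩ := isCompact_uIcc.exists_bound_of_continuousOn hf'
  refine LipschitzOnWith.absolutelyContinuousOnInterval (K := C.toNNReal)
    ((convex_uIcc a b).lipschitzOnWith_of_nnnorm_hasDerivWithin_le
      (fun x hx => (hf x hx).hasDerivWithinAt) fun x hx => ?_)
  rw [← NNReal.coe_le_coe, coe_nnnorm, Real.coe_toNNReal']
  exact (hC x hx).trans (le_max_left _ _)

lemma LocallyLipschitzOn.absolutelyContinuousOnInterval {X : Type*} [PseudoMetricSpace X]
    {f : ℝ → X} {a b : ℝ} (hf : LocallyLipschitzOn (uIcc a b) f) :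
    AbsolutelyContinuousOnInterval f a b :=
  (hf.exists_lipschitzOnWith_of_compact isCompact_uIcc).choose_spec.absolutelyContinuousOnInterval

namespace AbsolutelyContinuousOnInterval

lemma le_of_ae_hasDerivAt_nonneg {f : ℝ → ℝ} {a b : ℝ} (hab : a ≤ b)
    (hf : AbsolutelyContinuousOnInterval f a b)
    (hf' : ∀ᵐ x, x ∈ Ioo a b → ∃ d, HasDerivAt f d x ∧ 0 ≤ d) : f a ≤ f b := by
  rw [← sub_nonneg, ← hf.integral_deriv_eq_sub]
  refine intervalIntegral.integral_nonneg_of_ae_restrict hab ?_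
  rw [EventuallyLE, ← ae_restrict_congr_set Ioo_ae_eq_Icc, ae_restrict_iff' measurableSet_Ioo]
  filter_upwards [hf'] with x hx hxI
  obtain ⟨d, hd, hd0⟩ := hx hxI
  simpa [hd.deriv] using hd0

lemma nonneg_of_ae_hasDerivAt_ge_mul {w : ℝ → ℝ} {a b M : ℝ} (hab : a ≤ b)
    (hw : AbsolutelyContinuousOnInterval w a b) (ha : 0 ≤ w a)
    (hw' : ∀ᵐ x, x ∈ Ioo a b → w x < 0 → ∃ d, HasDerivAt w d x ∧ M * w x ≤ d) :
    0 ≤ w b := by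
  by_contra! hb
  have hw_cont : ContinuousOn w (Icc a b) := by simpa [uIcc_of_le hab] using hw.continuousOn
  obtain ⟨c, ⟨hc, hwc : 0 ≤ w c⟩, hc_max⟩ : ∃ c, IsGreatest (Icc a b ∩ w ⁻¹' Ici 0) c :=
    (isCompact_Icc.of_isClosed_subset
      (hw_cont.preimage_isClosed_of_isClosed isClosed_Icc isClosed_Ici)
      inter_subset_left).exists_isGreatest ⟨a, ⟨le_rfl, hab⟩, ha⟩
  have hcb : c < b := hc.2.lt_of_ne (by rintro rfl; linarith)
  have hneg : ∀ x ∈ Ioc c b, w x < 0 := fun x hx =>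
    not_le.1 fun h => not_le_of_gt hx.1 (hc_max ⟨⟨hc.1.trans hx.1.le, hx.2⟩, h⟩)
  -- `c` is the last point where `w ≥ 0`; on `(c, b]`, `w < 0` makes `w e^{-Mx}` nondecreasing
  have hF : AbsolutelyContinuousOnInterval (fun x => w x * exp (-M * x)) c b :=
    (hw.mono (uIcc_subset_uIcc (by simp [uIcc_of_le hab, hc]) (by simp [hab]))).fun_mul
      (ContDiffOn.absolutelyContinuousOnInterval (by fun_prop))
  have hmono := hF.le_of_ae_hasDerivAt_nonneg hcb.le (by
    filter_upwards [hw'] with x hx hxI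
    obtain ⟨d, hd, hdM⟩ := hx ⟨hc.1.trans_lt hxI.1, hxI.2⟩ (hneg x ⟨hxI.1, hxI.2.le⟩)
    refine ⟨_, hd.mul ((hasDerivAt_id' x).const_mul (-M)).exp, ?_⟩
    nlinarith [mul_nonneg (sub_nonneg.2 hdM) (exp_pos (-M * x)).le])
  nlinarith [mul_nonneg hwc (exp_pos (-M * c)).le, mul_neg_of_neg_of_pos hb (exp_pos (-M * b))]

theorem le_of_riccati_supersolution {s g : ℝ → ℝ} {a b c : ℝ} (hab : a ≤ b)
    (hs : AbsolutelyContinuousOnInterval s a b)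
    (hs' : ∀ᵐ x, x ∈ Ioo a b → ∃ d, HasDerivAt s d x ∧ s x ^ 2 - c ≤ d)
    (hg : ∀ x ∈ Icc a b, HasDerivAt g (g x ^ 2 - c) x)
    (hsg : g a ≤ s a) : g b ≤ s b := by
  have hgc : ContinuousOn g (Icc a b) := fun x hx => (hg x hx).continuousAt.continuousWithinAt
  have hgAC : AbsolutelyContinuousOnInterval g a b :=
    absolutelyContinuousOnInterval_of_hasDerivAt (by rwa [uIcc_of_le hab])
      (by rw [uIcc_of_le hab]; exact (hgc.pow 2).sub continuousOn_const)
  have hsc : ContinuousOn s (Icc a b) := by simpa only [uIcc_of_le hab] using hs.continuousOn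
  obtain ⟨M, hM⟩ : BddAbove ((fun x => s x + g x) '' Icc a b) :=
    isCompact_Icc.bddAbove_image (hsc.add hgc)
  rw [← sub_nonneg] at hsg ⊢
  apply nonneg_of_ae_hasDerivAt_ge_mul (M := M) hab (hs.fun_sub hgAC) hsg
  -- where `s < g`: `(s - g)' ≥ s² - g² = (s + g) (s - g) ≥ M (s - g)`
  filter_upwards [hs'] with x hx hxI hneg
  obtain ⟨d, hd, hdc⟩ := hx hxI
  refine ⟨_, hd.sub (hg x (Ioo_subset_Icc_self hxI)), ?_⟩
  have : s x + g x ≤ M := hM ⟨x, Ioo_subset_Icc_self hxI, rfl⟩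
  nlinarith [mul_le_mul_of_nonpos_right this hneg.le]

end AbsolutelyContinuousOnInterval

lemma hasDerivAt_coth {x : ℝ} (hx : x ≠ 0) : HasDerivAt coth (1 - coth x ^ 2) x := by
  have hs : sinh x ≠ 0 := sinh_ne_zero.2 hx
  refine ((hasDerivAt_cosh x).div (hasDerivAt_sinh x) hs).congr_deriv ?_
  unfold coth
  field_simp

lemma hasDerivAt_mul_coth_mul_sub {b T t : ℝ} (h : b * (T - t) ≠ 0) :
    HasDerivAt (fun t => b * coth (b * (T - t))) ((b * coth (b * (T - t))) ^ 2 - b ^ 2) t := by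
  refine (((hasDerivAt_coth h).comp t
    (((hasDerivAt_id' t).const_sub T).const_mul b)).const_mul b).congr_deriv ?_
  ring

lemma tendsto_coth_nhdsGT_zero : Tendsto coth (𝓝[>] 0) atTop := by
  have hcosh : Tendsto cosh (𝓝[>] 0) (𝓝 1) := by
    simpa using (continuous_cosh.tendsto 0).mono_left nhdsWithin_le_nhds
  have hsinh : Tendsto sinh (𝓝[>] 0) (𝓝[>] 0) :=
    tendsto_nhdsWithin_iff.2
      ⟨by simpa using (continuous_sinh.tendsto 0).mono_left nhdsWithin_le_nhds,
        eventually_nhdsWithin_of_forall fun x hx => sinh_pos_iff.2 hx⟩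
  exact hcosh.pos_mul_atTop one_pos (tendsto_inv_nhdsGT_zero.comp hsinh)

lemma tendsto_mul_coth_mul_sub_nhdsLT {b T : ℝ} (hb : 0 < b) :
    Tendsto (fun t => b * coth (b * (T - t))) (𝓝[<] T) atTop := by
  refine (tendsto_coth_nhdsGT_zero.comp (tendsto_nhdsWithin_iff.2 ⟨?_, ?_⟩)).const_mul_atTop hb
  · have : Continuous fun t : ℝ => b * (T - t) := by fun_prop
    exact tendsto_nhdsWithin_of_tendsto_nhds (by simpa using this.tendsto T)
  · exact eventually_nhdsWithin_of_forall fun t ht => mul_pos hb (sub_pos.2 ht)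

theorem stmt_13 (ε' b : ℝ) (hε' : 0 < ε') (hb : 0 < b)
    (s : ℝ → ℝ) (hcont : ContinuousOn s (Icc 0 ε'))
    (hlip : LocallyLipschitzOn (Ico 0 ε') s)
    (hineq : ∀ᵐ t ∂(volume : Measure ℝ), t ∈ Ico 0 ε' →
      ∃ d : ℝ, HasDerivWithinAt s d (Ico 0 ε') t ∧ -d + (s t) ^ 2 - b ^ 2 ≤ 0) :
    (b * coth (b * ε') ≤ s 0 → ∀ t ∈ Ico 0 ε', b * coth (b * (ε' - t)) ≤ s t) ∧
    ¬ (b * coth (b * ε') < s 0) := by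
  have hcomp (h0 : b * coth (b * ε') ≤ s 0) (t : ℝ) (ht : t ∈ Ico 0 ε') :
      b * coth (b * (ε' - t)) ≤ s t := by
    refine AbsolutelyContinuousOnInterval.le_of_riccati_supersolution ht.1
      ((hlip.mono (uIcc_of_le ht.1 ▸ Icc_subset_Ico_right ht.2)).absolutelyContinuousOnInterval)
      ?_ (fun x hx => hasDerivAt_mul_coth_mul_sub (mul_pos hb (sub_pos.2 (hx.2.trans_lt ht.2))).ne')
      (by simpa using h0)
    filter_upwards [hineq] with x hx hxI
    obtain ⟨d, hd, hds⟩ := hx ⟨hxI.1.le, hxI.2.trans ht.2⟩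
    exact ⟨d, hd.hasDerivAt (Ico_mem_nhds hxI.1 (hxI.2.trans ht.2)), by linarith⟩
  refine ⟨hcomp, fun hlt => ?_⟩
  have hs_lim : Tendsto s (𝓝[<] ε') (𝓝 (s ε')) :=
    (hcont ε' (right_mem_Icc.2 hε'.le)).tendsto.mono_left
      (nhdsWithin_le_of_mem (mem_of_superset (Ico_mem_nhdsLT hε') Ico_subset_Icc_self))
  have hs_top : Tendsto s (𝓝[<] ε') atTop :=
    tendsto_atTop_mono' _ (mem_of_superset (Ico_mem_nhdsLT hε') (hcomp hlt.le))
      (tendsto_mul_coth_mul_sub_nhdsLT hb)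
  exact not_tendsto_nhds_of_tendsto_atTop hs_top _ hs_lim
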